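/- For each λ₁>0, if (u,0) is a critical point of φ_V (a semi-trivial weak solution of the system on the finite graph), then ‖u‖_{W^{m₁,p}(V)} ≤ (λ₁ H₁(V) C_p(V)^{γ₁})^{1/(p−γ₁)}, where H₁(V) = max_{x∈V} h₁(x). Similarly, for each λ₂>0, if (0,v) is a critical point of φ_V, then ‖v‖_{W^{m₂,q}(V)} ≤ (λ₂ H₂(V) C_q(V)^{γ₂})^{1/(q−γ₂)}, where H₂(V) = max_{x∈V} h₂(x). -/
import Mathlib


open Finset Filter

/-- A locally finite weighted graph `G = (V, E)`: each vertex has a finite set of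
neighbours, symmetric positive edge weights `w`, and a vertex measure `mu`
uniformly bounded below by a positive constant. -/
structure GraphSetting (V : Type) where
  nbr : V → Finset V
  w : V → V → ℝ
  mu : V → ℝ
  nbr_symm : ∀ x y, y ∈ nbr x ↔ x ∈ nbr y
  nbr_irrefl : ∀ x, x ∉ nbr x
  w_symm : ∀ x y, w x y = w y x
  w_pos : ∀ x y, y ∈ nbr x → 0 < w x y
  mu_bound : ∃ μ₀ > 0, ∀ x, μ₀ ≤ mu x

/-- Membership in `W₀^{m,s}(Ω)`: `f` vanishes outside `Ω`. -/
def suppIn {V : Type} (Ω : Finset V) (f : V → ℝ) : Prop := ∀ x, x ∉ Ω → f x = 0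

namespace GraphSetting

variable {V : Type} [DecidableEq V] (G : GraphSetting V)

/-- `∫_A f dμ = ∑_{x ∈ A} f(x) μ(x)`. -/
noncomputable def integral (A : Finset V) (f : V → ℝ) : ℝ := ∑ x ∈ A, f x * G.mu x

/-- The graph Laplacian `Δf(x) = (1/μ(x)) ∑_{y ∼ x} ω_{xy} (f(y) - f(x))`. -/
noncomputable def lap (f : V → ℝ) (x : V) : ℝ :=
  (1 / G.mu x) * ∑ y ∈ G.nbr x, G.w x y * (f y - f x)

/-- The gradient form `Γ(f,g)(x)`. -/
noncomputable def gammaForm (f g : V → ℝ) (x : V) : ℝ :=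
  (1 / (2 * G.mu x)) * ∑ y ∈ G.nbr x, G.w x y * (f y - f x) * (g y - g x)

/-- `|∇f|(x) = Γ(f,f)(x)^{1/2}`. -/
noncomputable def gradLen (f : V → ℝ) (x : V) : ℝ := Real.sqrt (G.gammaForm f f x)

/-- `|∇^m f|`: `|∇ Δ^{(m-1)/2} f|` for odd `m`, `|Δ^{m/2} f|` for even `m`. -/
noncomputable def gradm (m : ℕ) (f : V → ℝ) (x : V) : ℝ :=
  if m % 2 = 1 then G.gradLen (G.lap^[(m - 1) / 2] f) x else |(G.lap^[m / 2] f) x|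

/-- The boundary `∂Ω = {y ∉ Ω | ∃ x ∈ Ω, xy ∈ E}`. -/
noncomputable def bdry (Ω : Finset V) : Finset V := Ω.biUnion G.nbr \ Ω

/-- The Sobolev norm `‖f‖_{W₀^{m,s}(Ω)} = (∫_{Ω ∪ ∂Ω} |∇^m f|^s dμ)^{1/s}`. -/
noncomputable def sobNorm (Ω bΩ : Finset V) (m : ℕ) (s : ℝ) (f : V → ℝ) : ℝ :=
  (∑ x ∈ Ω ∪ bΩ, G.gradm m f x ^ s * G.mu x) ^ (1 / s)

/-- `‖f‖_{L^r(A)} = (∫_A |f|^r dμ)^{1/r}`. -/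
noncomputable def lpNorm (A : Finset V) (r : ℝ) (f : V → ℝ) : ℝ :=
  (∑ x ∈ A, |f x| ^ r * G.mu x) ^ (1 / r)

/-- The weak form `B(u,φ) = ∫_Ω (£_{m,s} u) φ dμ` of the poly-Laplacian `£_{m,s}`. -/
noncomputable def bform (Ω bΩ : Finset V) (m : ℕ) (s : ℝ) (u φ : V → ℝ) : ℝ :=
  ∑ x ∈ Ω ∪ bΩ,
    G.gradm m u x ^ (s - 2) *
      (if m % 2 = 1 then G.gammaForm (G.lap^[(m - 1) / 2] u) (G.lap^[(m - 1) / 2] φ) x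
       else (G.lap^[m / 2] u) x * (G.lap^[m / 2] φ) x) * G.mu x

/-- The energy functional `φ(u,v)` of the poly-Laplacian system (2.1). -/
noncomputable def energySys (Ω bΩ : Finset V) (m₁ m₂ : ℕ)
    (p q γ₁ γ₂ lam₁ lam₂ α β : ℝ) (h₁ h₂ c : V → ℝ) (u v : V → ℝ) : ℝ :=
  (1 / p) * G.integral (Ω ∪ bΩ) (fun x => G.gradm m₁ u x ^ p)
    - (lam₁ / γ₁) * G.integral Ω (fun x => h₁ x * |u x| ^ γ₁)
    + (1 / q) * G.integral (Ω ∪ bΩ) (fun x => G.gradm m₂ v x ^ q)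
    - (lam₂ / γ₂) * G.integral Ω (fun x => h₂ x * |v x| ^ γ₂)
    - (1 / (α + β)) * G.integral Ω (fun x => c x * |u x| ^ α * |v x| ^ β)

/-- `(u,v)` is a weak solution of the poly-Laplacian system (1.4)
(equivalently, a critical point of the energy functional `φ`). -/
def isWeakSolSys (Ω bΩ : Finset V) (m₁ m₂ : ℕ)
    (p q γ₁ γ₂ lam₁ lam₂ α β : ℝ) (h₁ h₂ c : V → ℝ) (u v : V → ℝ) : Prop :=
  (∀ φ : V → ℝ, suppIn Ω φ →
      G.bform Ω bΩ m₁ p u φ =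
        lam₁ * G.integral Ω (fun x => h₁ x * |u x| ^ (γ₁ - 2) * u x * φ x)
        + α / (α + β) * G.integral Ω (fun x => c x * |u x| ^ (α - 2) * u x * |v x| ^ β * φ x)) ∧
  (∀ ψ : V → ℝ, suppIn Ω ψ →
      G.bform Ω bΩ m₂ q v ψ =
        lam₂ * G.integral Ω (fun x => h₂ x * |v x| ^ (γ₂ - 2) * v x * ψ x)
        + β / (α + β) * G.integral Ω (fun x => c x * |u x| ^ α * |v x| ^ (β - 2) * v x * ψ x))

/-- The derivative `⟨φ'(u,v), (φ,ψ)⟩` of the energy functional of the system (2.2). -/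
noncomputable def energyDerivSys (Ω bΩ : Finset V) (m₁ m₂ : ℕ)
    (p q γ₁ γ₂ lam₁ lam₂ α β : ℝ) (h₁ h₂ c : V → ℝ) (u v φ ψ : V → ℝ) : ℝ :=
  G.bform Ω bΩ m₁ p u φ
    - lam₁ * G.integral Ω (fun x => h₁ x * |u x| ^ (γ₁ - 2) * u x * φ x)
    + G.bform Ω bΩ m₂ q v ψ
    - lam₂ * G.integral Ω (fun x => h₂ x * |v x| ^ (γ₂ - 2) * v x * ψ x)
    - α / (α + β) * G.integral Ω (fun x => c x * |u x| ^ (α - 2) * u x * |v x| ^ β * φ x)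
    - β / (α + β) * G.integral Ω (fun x => c x * |u x| ^ α * |v x| ^ (β - 2) * v x * ψ x)

/-- The energy functional `J(u)` of the single poly-Laplacian equation (1.5). -/
noncomputable def energyEq (Ω bΩ : Finset V) (m : ℕ)
    (p γ lam α : ℝ) (h c : V → ℝ) (u : V → ℝ) : ℝ :=
  (1 / p) * G.sobNorm Ω bΩ m p u ^ p
    - lam / γ * G.integral Ω (fun x => h x * |u x| ^ γ)
    - (1 / α) * G.integral Ω (fun x => c x * |u x| ^ α)

/-- `u` is a weak solution of the single equation `£_{m,p} u = λ h |u|^{γ-2} u + c |u|^{α-2} u`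
(equivalently, a critical point of `J`). -/
def isWeakSolEq (Ω bΩ : Finset V) (m : ℕ)
    (p γ lam α : ℝ) (h c : V → ℝ) (u : V → ℝ) : Prop :=
  ∀ φ : V → ℝ, suppIn Ω φ →
    G.bform Ω bΩ m p u φ =
      lam * G.integral Ω (fun x => h x * |u x| ^ (γ - 2) * u x * φ x)
      + G.integral Ω (fun x => c x * |u x| ^ (α - 2) * u x * φ x)

section FiniteGraph

variable [Fintype V]

/-- `∫_V f dμ` on a finite graph. -/
noncomputable def integralV (f : V → ℝ) : ℝ := ∑ x, f x * G.mu x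

/-- `‖f‖_{L^r(V)}` on a finite graph. -/
noncomputable def lpNormV (r : ℝ) (f : V → ℝ) : ℝ :=
  (∑ x, |f x| ^ r * G.mu x) ^ (1 / r)

/-- `‖f‖_{W^{m,s}(V)} = (∫_V (|∇^m f|^s + a |f|^s) dμ)^{1/s}` with potential `a`. -/
noncomputable def sobNormV (m : ℕ) (s : ℝ) (a f : V → ℝ) : ℝ :=
  (∑ x, (G.gradm m f x ^ s + a x * |f x| ^ s) * G.mu x) ^ (1 / s)

/-- The weak form `∫_V (£_{m,s} u) φ dμ` on a finite graph. -/
noncomputable def bformV (m : ℕ) (s : ℝ) (u φ : V → ℝ) : ℝ :=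
  ∑ x,
    G.gradm m u x ^ (s - 2) *
      (if m % 2 = 1 then G.gammaForm (G.lap^[(m - 1) / 2] u) (G.lap^[(m - 1) / 2] φ) x
       else (G.lap^[m / 2] u) x * (G.lap^[m / 2] φ) x) * G.mu x

/-- The energy functional `φ_V(u,v)` of the system (5.1) on a finite graph. -/
noncomputable def energySysV (m₁ m₂ : ℕ)
    (p q γ₁ γ₂ lam₁ lam₂ α β : ℝ) (a b h₁ h₂ c : V → ℝ) (u v : V → ℝ) : ℝ :=
  (1 / p) * G.integralV (fun x => G.gradm m₁ u x ^ p + a x * |u x| ^ p)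
    - (lam₁ / γ₁) * G.integralV (fun x => h₁ x * |u x| ^ γ₁)
    + (1 / q) * G.integralV (fun x => G.gradm m₂ v x ^ q + b x * |v x| ^ q)
    - (lam₂ / γ₂) * G.integralV (fun x => h₂ x * |v x| ^ γ₂)
    - (1 / (α + β)) * G.integralV (fun x => c x * |u x| ^ α * |v x| ^ β)

/-- `(u,v)` is a weak solution of the system (5.1), i.e. a critical point of `φ_V`. -/
def isWeakSolSysV (m₁ m₂ : ℕ)
    (p q γ₁ γ₂ lam₁ lam₂ α β : ℝ) (a b h₁ h₂ c : V → ℝ) (u v : V → ℝ) : Prop :=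
  (∀ φ : V → ℝ,
      G.bformV m₁ p u φ + G.integralV (fun x => a x * |u x| ^ (p - 2) * u x * φ x) =
        lam₁ * G.integralV (fun x => h₁ x * |u x| ^ (γ₁ - 2) * u x * φ x)
        + α / (α + β) * G.integralV (fun x => c x * |u x| ^ (α - 2) * u x * |v x| ^ β * φ x)) ∧
  (∀ ψ : V → ℝ,
      G.bformV m₂ q v ψ + G.integralV (fun x => b x * |v x| ^ (q - 2) * v x * ψ x) =
        lam₂ * G.integralV (fun x => h₂ x * |v x| ^ (γ₂ - 2) * v x * ψ x)
        + β / (α + β) * G.integralV (fun x => c x * |u x| ^ α * |v x| ^ (β - 2) * v x * ψ x))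

/-- The energy functional `J_V(u)` of the single equation (5.2) on a finite graph. -/
noncomputable def energyEqV (m : ℕ)
    (p γ lam α : ℝ) (a h c : V → ℝ) (u : V → ℝ) : ℝ :=
  (1 / p) * G.sobNormV m p a u ^ p
    - lam / γ * G.integralV (fun x => h x * |u x| ^ γ)
    - (1 / α) * G.integralV (fun x => c x * |u x| ^ α)

/-- `u` is a weak solution of `£_{m,p} u + a|u|^{p-2}u = λ h |u|^{γ-2} u + c |u|^{α-2} u` on `V`,
i.e. a critical point of `J_V`. -/
def isWeakSolEqV (m : ℕ)
    (p γ lam α : ℝ) (a h c : V → ℝ) (u : V → ℝ) : Prop :=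
  ∀ φ : V → ℝ,
    G.bformV m p u φ + G.integralV (fun x => a x * |u x| ^ (p - 2) * u x * φ x) =
      lam * G.integralV (fun x => h x * |u x| ^ (γ - 2) * u x * φ x)
      + G.integralV (fun x => c x * |u x| ^ (α - 2) * u x * φ x)

end FiniteGraph

end GraphSetting

lemma pow_helper (t : ℝ) (ht : 0 ≤ t) (p : ℝ) (hp : p ≠ 0) :
    t ^ (p - 2) * t ^ (2 : ℕ) = t ^ p := by
  rcases eq_or_lt_of_le ht with h | h
  · rw [← h]
    simp [Real.zero_rpow hp]
  · rw [← Real.rpow_natCast t 2, ← Real.rpow_add h]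
    norm_num

lemma gamma_nonneg {V : Type} [DecidableEq V] (G : GraphSetting V) (f : V → ℝ) (x : V) :
    0 ≤ G.gammaForm f f x := by
  obtain ⟨μ₀, hμ₀, hμ⟩ := G.mu_bound
  have hmu : 0 < G.mu x := lt_of_lt_of_le hμ₀ (hμ x)
  unfold GraphSetting.gammaForm
  apply mul_nonneg
  · positivity
  · apply Finset.sum_nonneg
    intro y hy
    have hw := G.w_pos x y hy
    have he : G.w x y * (f y - f x) * (f y - f x) = G.w x y * (f y - f x) ^ 2 := by ring
    rw [he]
    exact mul_nonneg hw.le (sq_nonneg _)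

lemma gradm_nonneg {V : Type} [DecidableEq V] (G : GraphSetting V) (m : ℕ) (f : V → ℝ)
    (x : V) : 0 ≤ G.gradm m f x := by
  unfold GraphSetting.gradm
  split
  · exact Real.sqrt_nonneg _
  · exact abs_nonneg _

lemma sol_estimate {V : Type} [DecidableEq V] [Fintype V] [Nonempty V] (G : GraphSetting V)
    (m : ℕ) (p γ lam C : ℝ) (hp : 1 < p) (hγ : 1 < γ) (hγp : γ < p)
    (a h : V → ℝ) (ha : ∀ x, 0 < a x) (hh : ∀ x, 0 < h x) (hC : 0 < C)
    (hemb : ∀ r : ℝ, 1 ≤ r → ∀ u : V → ℝ, G.lpNormV r u ≤ C * G.sobNormV m p a u)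
    (hlam : 0 < lam) (u : V → ℝ)
    (hsol : G.bformV m p u u + G.integralV (fun x => a x * |u x| ^ (p - 2) * u x * u x)
      = lam * G.integralV (fun x => h x * |u x| ^ (γ - 2) * u x * u x)) :
    G.sobNormV m p a u
      ≤ (lam * Finset.univ.sup' Finset.univ_nonempty h * C ^ γ) ^ (1 / (p - γ)) := by
  obtain ⟨μ₀, hμ₀, hμ⟩ := G.mu_bound
  have hmu : ∀ x, 0 < G.mu x := fun x => lt_of_lt_of_le hμ₀ (hμ x)
  set H := Finset.univ.sup' Finset.univ_nonempty h with hHdef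
  have hHpos : 0 < H :=
    lt_of_lt_of_le (hh (Classical.arbitrary V)) (Finset.le_sup' h (Finset.mem_univ _))
  have hp0 : (0 : ℝ) < p := by linarith
  have hγ0 : (0 : ℝ) < γ := by linarith
  have hpγ : (0 : ℝ) < p - γ := by linarith
  set N := G.sobNormV m p a u with hNdef
  set S := ∑ x, (G.gradm m u x ^ p + a x * |u x| ^ p) * G.mu x with hSdef
  have hSnn : 0 ≤ S := by
    apply Finset.sum_nonneg
    intro x _
    exact mul_nonneg (add_nonneg (Real.rpow_nonneg (gradm_nonneg G m u x) p)
      (mul_nonneg (ha x).le (Real.rpow_nonneg (abs_nonneg _) p))) (hmu x).le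
  have hNnn : 0 ≤ N := Real.rpow_nonneg hSnn _
  have hNp : N ^ p = S := by
    rw [hNdef]
    show ((∑ x, (G.gradm m u x ^ p + a x * |u x| ^ p) * G.mu x) ^ (1 / p)) ^ p = S
    rw [← hSdef, ← Real.rpow_mul hSnn, one_div, inv_mul_cancel₀ hp0.ne', Real.rpow_one]
  have hLHS : G.bformV m p u u + G.integralV (fun x => a x * |u x| ^ (p - 2) * u x * u x)
      = S := by
    unfold GraphSetting.bformV GraphSetting.integralV
    rw [← Finset.sum_add_distrib]
    apply Finset.sum_congr rfl
    intro x _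
    have h1 : (if m % 2 = 1 then
          G.gammaForm (G.lap^[(m - 1) / 2] u) (G.lap^[(m - 1) / 2] u) x
        else (G.lap^[m / 2] u) x * (G.lap^[m / 2] u) x) = G.gradm m u x ^ (2 : ℕ) := by
      unfold GraphSetting.gradm
      by_cases hodd : m % 2 = 1
      · simp only [if_pos hodd]
        unfold GraphSetting.gradLen
        rw [Real.sq_sqrt (gamma_nonneg G _ x)]
      · simp only [if_neg hodd]
        rw [sq_abs]
        ring
    rw [h1]
    have h3 : a x * |u x| ^ (p - 2) * u x * u x = a x * |u x| ^ p := by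
      have e : u x * u x = |u x| ^ (2 : ℕ) := by rw [sq_abs]; ring
      calc a x * |u x| ^ (p - 2) * u x * u x
          = a x * (|u x| ^ (p - 2) * (u x * u x)) := by ring
        _ = a x * (|u x| ^ (p - 2) * |u x| ^ (2 : ℕ)) := by rw [e]
        _ = a x * |u x| ^ p := by rw [pow_helper _ (abs_nonneg _) p hp0.ne']
    beta_reduce
    rw [h3, pow_helper _ (gradm_nonneg G m u x) p hp0.ne']
    ring
  set T := ∑ x, |u x| ^ γ * G.mu x with hTdef
  have hTnn : 0 ≤ T := by
    apply Finset.sum_nonneg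
    intro x _
    exact mul_nonneg (Real.rpow_nonneg (abs_nonneg _) _) (hmu x).le
  have hsum : G.integralV (fun x => h x * |u x| ^ (γ - 2) * u x * u x) ≤ H * T := by
    unfold GraphSetting.integralV
    rw [hTdef, Finset.mul_sum]
    apply Finset.sum_le_sum
    intro x _
    have h3 : h x * |u x| ^ (γ - 2) * u x * u x = h x * |u x| ^ γ := by
      have e : u x * u x = |u x| ^ (2 : ℕ) := by rw [sq_abs]; ring
      calc h x * |u x| ^ (γ - 2) * u x * u x
          = h x * (|u x| ^ (γ - 2) * (u x * u x)) := by ring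
        _ = h x * (|u x| ^ (γ - 2) * |u x| ^ (2 : ℕ)) := by rw [e]
        _ = h x * |u x| ^ γ := by rw [pow_helper _ (abs_nonneg _) γ hγ0.ne']
    beta_reduce
    rw [h3]
    have hxh : h x ≤ H := Finset.le_sup' h (Finset.mem_univ x)
    calc h x * |u x| ^ γ * G.mu x ≤ H * |u x| ^ γ * G.mu x := by
          apply mul_le_mul_of_nonneg_right _ (hmu x).le
          exact mul_le_mul_of_nonneg_right hxh (Real.rpow_nonneg (abs_nonneg _) _)
      _ = H * (|u x| ^ γ * G.mu x) := by ring
  have hTle : T ≤ C ^ γ * N ^ γ := by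
    have hlp : G.lpNormV γ u = T ^ (1 / γ) := by
      unfold GraphSetting.lpNormV
      rw [hTdef]
    have hTγ : T = G.lpNormV γ u ^ γ := by
      rw [hlp, ← Real.rpow_mul hTnn, one_div, inv_mul_cancel₀ hγ0.ne', Real.rpow_one]
    have hlpnn : 0 ≤ G.lpNormV γ u := by rw [hlp]; exact Real.rpow_nonneg hTnn _
    calc T = G.lpNormV γ u ^ γ := hTγ
      _ ≤ (C * N) ^ γ := Real.rpow_le_rpow hlpnn (hemb γ hγ.le u) hγ0.le
      _ = C ^ γ * N ^ γ := Real.mul_rpow hC.le hNnn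
  have hkey : N ^ p ≤ lam * H * C ^ γ * N ^ γ := by
    calc N ^ p = S := hNp
      _ = lam * G.integralV (fun x => h x * |u x| ^ (γ - 2) * u x * u x) := by
          rw [← hLHS, hsol]
      _ ≤ lam * (H * T) := by
          exact mul_le_mul_of_nonneg_left hsum hlam.le
      _ ≤ lam * (H * (C ^ γ * N ^ γ)) := by
          apply mul_le_mul_of_nonneg_left _ hlam.le
          exact mul_le_mul_of_nonneg_left hTle hHpos.le
      _ = lam * H * C ^ γ * N ^ γ := by ring
  have hKpos : 0 < lam * H * C ^ γ := by positivity
  rcases eq_or_lt_of_le hNnn with hN0 | hNpos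
  · rw [← hN0]
    positivity
  · have hNg : N ^ (p - γ) ≤ lam * H * C ^ γ := by
      have e : N ^ p = N ^ (p - γ) * N ^ γ := by
        rw [← Real.rpow_add hNpos]
        ring_nf
      rw [e] at hkey
      exact le_of_mul_le_mul_right hkey (Real.rpow_pos_of_pos hNpos γ)
    calc N = (N ^ (p - γ)) ^ (1 / (p - γ)) := by
          rw [← Real.rpow_mul hNnn, mul_one_div, div_self hpγ.ne', Real.rpow_one]
      _ ≤ (lam * H * C ^ γ) ^ (1 / (p - γ)) :=
          Real.rpow_le_rpow (Real.rpow_nonneg hNnn _) hNg (by positivity)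

/-- Theorem 5.2: estimates for semi-trivial solutions on a finite graph. -/
theorem finite_graph_semi_trivial_solution_estimate
    {V : Type} [DecidableEq V] [Fintype V] [Nonempty V] (G : GraphSetting V)
    (m₁ m₂ : ℕ) (hm₁ : 0 < m₁) (hm₂ : 0 < m₂)
    (p q γ₁ γ₂ lam₁ lam₂ α β : ℝ)
    (hp : 1 < p) (hq : 1 < q) (hγ₁ : 1 < γ₁) (hγ₂ : 1 < γ₂)
    (hα : 0 < α) (hβ : 0 < β)
    (hγpq : max γ₁ γ₂ < min p q) (hpqαβ : max p q < α + β)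
    (a b h₁ h₂ c : V → ℝ)
    (ha : ∀ x, 0 < a x) (hb : ∀ x, 0 < b x)
    (hh₁ : ∀ x, 0 < h₁ x) (hh₂ : ∀ x, 0 < h₂ x) (hc : ∀ x, 0 < c x)
    (Cp Cq : ℝ) (hCp : 0 < Cp) (hCq : 0 < Cq)
    (hembp : ∀ r : ℝ, 1 ≤ r → ∀ u : V → ℝ, G.lpNormV r u ≤ Cp * G.sobNormV m₁ p a u)
    (hembq : ∀ r : ℝ, 1 ≤ r → ∀ v : V → ℝ, G.lpNormV r v ≤ Cq * G.sobNormV m₂ q b v)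
    (hlam₁ : 0 < lam₁) (hlam₂ : 0 < lam₂) :
    (∀ u : V → ℝ, G.isWeakSolSysV m₁ m₂ p q γ₁ γ₂ lam₁ lam₂ α β a b h₁ h₂ c u 0 →
        G.sobNormV m₁ p a u
          ≤ (lam₁ * Finset.univ.sup' Finset.univ_nonempty h₁ * Cp ^ γ₁) ^ (1 / (p - γ₁))) ∧
    (∀ v : V → ℝ, G.isWeakSolSysV m₁ m₂ p q γ₁ γ₂ lam₁ lam₂ α β a b h₁ h₂ c 0 v →
        G.sobNormV m₂ q b v
          ≤ (lam₂ * Finset.univ.sup' Finset.univ_nonempty h₂ * Cq ^ γ₂) ^ (1 / (q - γ₂))) := by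
  have hγ₁p : γ₁ < p := lt_of_le_of_lt (le_max_left γ₁ γ₂)
    (lt_of_lt_of_le hγpq (min_le_left p q))
  have hγ₂q : γ₂ < q := lt_of_le_of_lt (le_max_right γ₁ γ₂)
    (lt_of_lt_of_le hγpq (min_le_right p q))
  constructor
  · intro u hu
    have h1 := hu.1 u
    have hz : G.integralV
        (fun x => c x * |u x| ^ (α - 2) * u x * |(0 : V → ℝ) x| ^ β * u x) = 0 := by
      unfold GraphSetting.integralV
      simp [Real.zero_rpow hβ.ne']
    rw [hz, mul_zero, add_zero] at h1
    exact sol_estimate G m₁ p γ₁ lam₁ Cp hp hγ₁ hγ₁p a h₁ ha hh₁ hCp hembp hlam₁ u h1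
  · intro v hv
    have h2 := hv.2 v
    have hz : G.integralV
        (fun x => c x * |(0 : V → ℝ) x| ^ α * |v x| ^ (β - 2) * v x * v x) = 0 := by
      unfold GraphSetting.integralV
      simp [Real.zero_rpow hα.ne']
    rw [hz, mul_zero, add_zero] at h2
    exact sol_estimate G m₂ q γ₂ lam₂ Cq hq hγ₂ hγ₂q b h₂ hb hh₂ hCq hembq hlam₂ v h2
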